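/- arXiv:0906.1953 — 4 statements merged into one kernel-verified Lean document; each statement's English description precedes it below -/
import Mathlib

section
/- Let G be a connected graph on n vertices, let C be a capacity vector of size n all of whose entries are at most ℓ, and suppose X ⊆ V(G) is a set of vertices assigned to bucket i in some C-bucket arrangement of G. Then the graph G \ X has at most 2ℓ connected components. -/
/-- `C : Fin k → ℕ` is an `(n,ℓ)`-capacity vector: it has length `k = ⌈n/ℓ⌉`,
positive entries summing to `n`, all entries at most `ℓ`, and all middle entries equal to `ℓ`. -/
def IsNLCapacityVector (n ℓ : ℕ) {k : ℕ} (C : Fin k → ℕ) : Prop :=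
  k = (n + ℓ - 1) / ℓ ∧ (∀ i, 0 < C i) ∧ (∑ i, C i) = n ∧
  (∀ i : Fin k, C i ≤ ℓ) ∧ (∀ i : Fin k, 0 < (i : ℕ) → (i : ℕ) < k - 1 → C i = ℓ)

/-- `B` is a `C`-bucket arrangement of `G`: every edge joins vertices in the same or
consecutive buckets, and exactly `C i` vertices are placed in bucket `i`. -/
def IsBucketArrangement {V : Type*} [Fintype V] [DecidableEq V] (G : SimpleGraph V)
    {k : ℕ} (C : Fin k → ℕ) (B : V → Fin k) : Prop :=
  (∀ u v, G.Adj u v → ((B u : ℤ) - (B v : ℤ)).natAbs ≤ 1) ∧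
  (∀ i, (Finset.univ.filter (fun v => B v = i)).card = C i)

lemma bdry_aux {V : Type*} (G : SimpleGraph V) (X : Set V) :
    ∀ {v x0 : V} (_ : G.Walk v x0), v ∈ Xᶜ → x0 ∈ X →
    ∃ w, ∃ hw : w ∈ Xᶜ, (∃ x ∈ X, G.Adj w x) ∧
      ∀ hv : v ∈ Xᶜ, (G.induce Xᶜ).Reachable ⟨v, hv⟩ ⟨w, hw⟩ := by
  intro v x0 p
  induction p with
  | nil => intro hv hx; exact absurd hx hv
  | @cons a b c h p ih =>
    intro hv hx
    by_cases hb : b ∈ X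
    · exact ⟨a, hv, ⟨b, hb, h⟩, fun hv' => SimpleGraph.Reachable.refl _⟩
    · obtain ⟨w, hw, hadj, hr⟩ := ih hb hx
      refine ⟨w, hw, hadj, fun hv' => SimpleGraph.Reachable.trans ?_ (hr hb)⟩
      exact SimpleGraph.Adj.reachable (by exact h : (G.induce Xᶜ).Adj ⟨a, hv'⟩ ⟨b, hb⟩)


theorem components_card_le_of_bucket_arrangement
    {V : Type*} [Fintype V] [DecidableEq V] (G : SimpleGraph V) (hG : G.Connected)
    (n ℓ k : ℕ) (hn : Fintype.card V = n)
    (C : Fin k → ℕ) (hpos : ∀ i, 0 < C i) (hle : ∀ i, C i ≤ ℓ) (hsum : ∑ i, C i = n)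
    (B : V → Fin k) (hB : IsBucketArrangement G C B)
    (i : Fin k) (X : Set V) (hX : X = {v | B v = i}) :
    Nat.card ((G.induce Xᶜ).ConnectedComponent) ≤ 2 * ℓ := by
  classical
  obtain ⟨hedge, hcard⟩ := hB
  subst hX
  -- a vertex in bucket i
  have hx0 : ∃ x0, B x0 = i := by
    have h1 := hcard i
    have h2 := hpos i
    rw [← h1] at h2
    obtain ⟨x0, hx0⟩ := Finset.card_pos.mp h2
    exact ⟨x0, (Finset.mem_filter.mp hx0).2⟩
  obtain ⟨x0, hx0⟩ := hx0
  set X : Set V := {v | B v = i} with hXdef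
  set S : Finset V := Finset.univ.filter (fun w => ¬ (B w = i) ∧ ∃ x, B x = i ∧ G.Adj w x)
    with hSdef
  have key : ∀ c : (G.induce Xᶜ).ConnectedComponent,
      ∃ w, ∃ hw : w ∈ Xᶜ, w ∈ S ∧ (G.induce Xᶜ).connectedComponentMk ⟨w, hw⟩ = c := by
    intro c
    obtain ⟨v, hv⟩ := c.exists_rep
    obtain ⟨p⟩ := hG.preconnected v.1 x0
    obtain ⟨w, hw, ⟨x, hxX, hadj⟩, hr⟩ := bdry_aux G X p v.2 hx0
    refine ⟨w, hw, ?_, ?_⟩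
    · simp only [hSdef, Finset.mem_filter, Finset.mem_univ, true_and]
      exact ⟨hw, x, hxX, hadj⟩
    · rw [← hv]
      exact (SimpleGraph.ConnectedComponent.sound (hr v.2)).symm
  choose F hmem hS hcomp using key
  have hinj : Function.Injective (fun c => (⟨F c, hS c⟩ : {x // x ∈ S})) := by
    intro c1 c2 h
    have : F c1 = F c2 := congrArg Subtype.val h
    rw [← hcomp c1, ← hcomp c2]
    congr 1
    exact Subtype.ext this
  have h1 : Nat.card ((G.induce Xᶜ).ConnectedComponent) ≤ S.card := by
    calc Nat.card ((G.induce Xᶜ).ConnectedComponent) ≤ Nat.card {x // x ∈ S} :=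
          Nat.card_le_card_of_injective _ hinj
      _ = S.card := Nat.card_eq_finsetCard S
  refine h1.trans ?_
  -- now S.card ≤ 2ℓ
  have hfilt : ∀ m : ℤ, (Finset.univ.filter (fun w => (B w : ℤ) = m)).card ≤ ℓ := by
    intro m
    rcases (Finset.univ.filter (fun w => (B w : ℤ) = m)).eq_empty_or_nonempty with he | ⟨w0, hw0⟩
    · simp [he]
    · have hw0' : (B w0 : ℤ) = m := (Finset.mem_filter.mp hw0).2
      have hsub : (Finset.univ.filter (fun w => (B w : ℤ) = m)) ⊆
          (Finset.univ.filter (fun w => B w = B w0)) := by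
        intro v hv
        simp only [Finset.mem_filter, Finset.mem_univ, true_and] at hv ⊢
        have : (B v : ℤ) = (B w0 : ℤ) := by rw [hv, hw0']
        exact Fin.ext (by exact_mod_cast this)
      calc _ ≤ (Finset.univ.filter (fun w => B w = B w0)).card := Finset.card_le_card hsub
        _ = C (B w0) := hcard (B w0)
        _ ≤ ℓ := hle _
  have hsub : S ⊆ (Finset.univ.filter (fun w => (B w : ℤ) = (i : ℤ) - 1)) ∪
      (Finset.univ.filter (fun w => (B w : ℤ) = (i : ℤ) + 1)) := by
    intro w hw
    simp only [hSdef, Finset.mem_filter, Finset.mem_univ, true_and, Finset.mem_union] at hw ⊢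
    obtain ⟨hne, x, hx, hadj⟩ := hw
    have h1 := hedge w x hadj
    have hne' : (B w : ℤ) ≠ (B x : ℤ) := by
      intro h; exact hne (by rw [hx] at *; exact Fin.ext (by exact_mod_cast h))
    rw [hx] at h1 hne'
    omega
  calc S.card ≤ _ := Finset.card_le_card hsub
    _ ≤ _ + _ := Finset.card_union_le _ _
    _ ≤ ℓ + ℓ := Nat.add_le_add (hfilt _) (hfilt _)
    _ = 2 * ℓ := by ring
end

section
/- Let ℓ < n/2 and let C be an (n,ℓ)-capacity vector of length k = ⌈n/ℓ⌉. Then there exists a bucket index i (1 ≤ i ≤ k) such that the sum of the capacities of buckets with index strictly smaller than i is at most n/2, and the sum of the capacities of buckets with index strictly larger than i is also at most n/2. -/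
theorem exists_middle_bucket (n ℓ k : ℕ) (hℓ : 0 < ℓ) (hhalf : 2 * ℓ < n)
    (C : Fin k → ℕ) (hC : IsNLCapacityVector n ℓ C) :
    ∃ i : Fin k,
      2 * (∑ j ∈ Finset.univ.filter (fun j => j < i), C j) ≤ n ∧
      2 * (∑ j ∈ Finset.univ.filter (fun j => i < j), C j) ≤ n := by
  obtain ⟨hk, hpos, hsum, hle, hmid⟩ := hC
  have hn : 0 < n := by omega
  have hk0 : 0 < k := by
    rcases Nat.eq_zero_or_pos k with h | h
    · subst h; simp at hsum; omega
    · exact h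
  set f : ℕ → ℕ := fun m => ∑ j ∈ Finset.univ.filter (fun j : Fin k => (j : ℕ) < m), C j
    with hf
  have hP0 : 2 * f 0 ≤ n := by simp [hf]
  set i := Nat.findGreatest (fun m => 2 * f m ≤ n) (k - 1) with hi
  have hile : i ≤ k - 1 := Nat.findGreatest_le _
  have hPi : 2 * f i ≤ n := Nat.findGreatest_spec (P := fun m => 2 * f m ≤ n) (Nat.zero_le _) hP0
  have hik : i < k := by omega
  refine ⟨⟨i, hik⟩, ?_, ?_⟩
  · have : (Finset.univ.filter (fun j : Fin k => j < (⟨i, hik⟩ : Fin k)))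
        = Finset.univ.filter (fun j : Fin k => (j : ℕ) < i) := by
      apply Finset.filter_congr; intro j _; simp [Fin.lt_def]
    rw [this]; exact hPi
  · have hpart : f (i + 1) + (∑ j ∈ Finset.univ.filter
        (fun j : Fin k => (⟨i, hik⟩ : Fin k) < j), C j) = n := by
      have heq : f (i + 1) = ∑ j ∈ Finset.univ.filter
          (fun j : Fin k => ¬ ((⟨i, hik⟩ : Fin k) < j)), C j := by
        apply Finset.sum_congr _ (fun _ _ => rfl)
        apply Finset.filter_congr; intro j _
        simp [Fin.lt_def]
      rw [heq, add_comm, Finset.sum_filter_add_sum_filter_not, hsum]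
    rcases Nat.lt_or_ge i (k - 1) with hlt | hge
    · have hgt : Nat.findGreatest (fun m => 2 * f m ≤ n) (k - 1) < i + 1 := by omega
      have hnP : ¬ 2 * f (i + 1) ≤ n :=
        Nat.findGreatest_is_greatest (P := fun m => 2 * f m ≤ n) hgt hlt
      omega
    · have hieq : i = k - 1 := by omega
      have hempty : Finset.univ.filter (fun j : Fin k => (⟨i, hik⟩ : Fin k) < j) = ∅ := by
        apply Finset.filter_false_of_mem; intro j _
        simp only [Fin.lt_def]
        have := j.isLt; omega
      rw [hempty]; simp
end

section
/- Let G be a graph with a C-bucket arrangement where bucket i is exactly X, let Y be the set of vertices in buckets 1,…,i-1, and let Z ⊆ Y be the vertices of Y with a neighbor in X. Let G' be the graph obtained from the induced subgraph G[Y] by adding all edges between pairs of vertices in Z. If Y and Z are nonempty and G is connected, then G' is connected. -/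
theorem induced_plus_clique_connected
    {V : Type*} [Fintype V] [DecidableEq V] (G : SimpleGraph V) (hG : G.Connected)
    (k : ℕ) (C : Fin k → ℕ) (B : V → Fin k) (hB : IsBucketArrangement G C B)
    (i : Fin k) (X Y Z : Set V)
    (hX : X = {v | B v = i})
    (hY : Y = {v | (B v : ℕ) < (i : ℕ)})
    (hZ : Z = {v ∈ Y | ∃ x ∈ X, G.Adj v x})
    (hYne : Y.Nonempty) (hZne : Z.Nonempty) :
    (G.induce Y ⊔
      SimpleGraph.fromRel (fun u v : ↥Y => (u : V) ∈ Z ∧ (v : V) ∈ Z)).Connected := by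
  set G' := (G.induce Y ⊔
      SimpleGraph.fromRel (fun u v : ↥Y => (u : V) ∈ Z ∧ (v : V) ∈ Z)) with hG'
  have hZY : Z ⊆ Y := by intro z hz; rw [hZ] at hz; exact hz.1
  -- key lemma: any y ∈ Y with a walk to some x ∈ X reaches Z within G'
  have key : ∀ (y x : V) (w : G.Walk y x), ∀ hy : y ∈ Y, x ∈ X →
      ∃ z : V, ∃ hz : z ∈ Y, z ∈ Z ∧ G'.Reachable ⟨y, hy⟩ ⟨z, hz⟩ := by
    intro y x w
    induction w with
    | nil =>
      intro hy hx
      rw [hY] at hy; rw [hX] at hx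
      simp only [Set.mem_setOf_eq] at hy hx
      rw [hx] at hy; omega
    | cons h w ih =>
      rename_i a b c
      intro hy hx
      by_cases hb : b ∈ Y
      · obtain ⟨z, hzY, hzZ, hreach⟩ := ih hb hx
        refine ⟨z, hzY, hzZ, SimpleGraph.Reachable.trans ?_ hreach⟩
        apply SimpleGraph.Adj.reachable
        exact Or.inl h
      · -- b ∉ Y, so B b ≥ i; bucket constraint forces B b = i, so a ∈ Z
        have hba := hB.1 a b h
        rw [hY] at hy hb
        simp only [Set.mem_setOf_eq, not_lt] at hy hb
        have hbi : B b = i := by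
          have := Fin.val_injective (a₁ := B b) (a₂ := i)
          apply Fin.ext; omega
        have haZ : a ∈ Z := by
          rw [hZ]
          refine ⟨by rw [hY]; exact hy, b, by rw [hX]; exact hbi, h⟩
        exact ⟨a, hY ▸ hy, haZ, SimpleGraph.Reachable.refl _⟩
  have hXne : X.Nonempty := by
    obtain ⟨z, hz⟩ := hZne
    rw [hZ] at hz
    obtain ⟨x, hx, _⟩ := hz.2
    exact ⟨x, hx⟩
  obtain ⟨x0, hx0⟩ := hXne
  rw [SimpleGraph.connected_iff]
  constructor
  · intro u v
    obtain ⟨wu⟩ := hG.preconnected u x0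
    obtain ⟨wv⟩ := hG.preconnected v x0
    obtain ⟨zu, hzuY, hzuZ, hu⟩ := key u x0 wu u.2 hx0
    obtain ⟨zv, hzvY, hzvZ, hv⟩ := key v x0 wv v.2 hx0
    have : G'.Reachable ⟨zu, hzuY⟩ ⟨zv, hzvY⟩ := by
      by_cases hzz : zu = zv
      · subst hzz; exact SimpleGraph.Reachable.refl _
      · apply SimpleGraph.Adj.reachable
        refine Or.inr ⟨?_, Or.inl ⟨hzuZ, hzvZ⟩⟩
        simp [Subtype.ext_iff, hzz]
    have hu' : G'.Reachable u ⟨zu, hzuY⟩ := by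
      convert hu using 2
    have hv' : G'.Reachable v ⟨zv, hzvY⟩ := by
      convert hv using 2
    exact hu'.trans (this.trans hv'.symm)
  · obtain ⟨y, hy⟩ := hYne; exact ⟨⟨y, hy⟩⟩
end

section
/- If every entry of a capacity vector C of size n is at least ℓ and G has bandwidth at most ℓ, then G has a C-bucket arrangement; consequently, the minimum ℓ for which G admits a bucket arrangement with some (n,ℓ)-capacity vector is at most the bandwidth of G, and the bandwidth of G is at most 2ℓ - 1 for this minimum ℓ. Hence reporting 2ℓ - 1 for the minimal such ℓ is a 2-approximation of the bandwidth. -/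
/-- The bandwidth of a finite graph: the least `b` such that some bijective labeling of the
vertices by `1,…,n` stretches every edge by at most `b`. -/
noncomputable def bandwidth {V : Type*} [Fintype V] (G : SimpleGraph V) : ℕ :=
  sInf {b | ∃ L : V ≃ Fin (Fintype.card V),
    ∀ u v, G.Adj u v → ((L u : ℤ) - (L v : ℤ)).natAbs ≤ b}



open Finset

section Helpers

/-- Partial sums of a capacity vector, extended by zero. -/
def pS {k : ℕ} (C : Fin k → ℕ) (i : ℕ) : ℕ :=
  ∑ j ∈ Finset.range i, (if h : j < k then C ⟨j, h⟩ else 0)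

lemma pS_mono {k : ℕ} (C : Fin k → ℕ) : Monotone (pS C) := fun _ _ hab =>
  Finset.sum_le_sum_of_subset (Finset.range_subset_range.2 hab)

lemma pS_succ {k : ℕ} (C : Fin k → ℕ) (i : ℕ) :
    pS C (i + 1) = pS C i + (if h : i < k then C ⟨i, h⟩ else 0) :=
  Finset.sum_range_succ _ i

lemma pS_k {k : ℕ} (C : Fin k → ℕ) : pS C k = ∑ i, C i := by
  rw [pS, ← Fin.sum_univ_eq_sum_range]
  exact Finset.sum_congr rfl fun i _ => by simp [i.isLt]

/-- The bucket of position `p`. -/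
def bkt {k : ℕ} (C : Fin k → ℕ) (p : ℕ) : ℕ :=
  Nat.findGreatest (fun i => pS C i ≤ p) (k - 1)

lemma bkt_le {k : ℕ} (C : Fin k → ℕ) (p : ℕ) : bkt C p ≤ k - 1 :=
  Nat.findGreatest_le _

lemma pS_bkt_le {k : ℕ} (C : Fin k → ℕ) (p : ℕ) : pS C (bkt C p) ≤ p :=
  Nat.findGreatest_spec (P := fun i => pS C i ≤ p) (Nat.zero_le _) (by simp [pS])

lemma lt_pS_bkt_succ {k : ℕ} (C : Fin k → ℕ) {p : ℕ} (hp : p < pS C k) :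
    p < pS C (bkt C p + 1) := by
  by_contra h
  push_neg at h
  have hk : 0 < k := by
    rcases Nat.eq_zero_or_pos k with h0 | h0
    · subst h0; simp [pS] at hp
    · exact h0
  rcases lt_or_ge (bkt C p) (k - 1) with hlt | hge
  · exact Nat.findGreatest_is_greatest (P := fun i => pS C i ≤ p)
      (Nat.lt_succ_self _) (show bkt C p + 1 ≤ k - 1 by omega) h
  · have heq : bkt C p = k - 1 := le_antisymm (bkt_le C p) hge
    have : pS C k ≤ p := le_trans (pS_mono C (by omega)) h
    omega

lemma bkt_mono {k : ℕ} (C : Fin k → ℕ) {p q : ℕ} (hpq : p ≤ q) :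
    bkt C p ≤ bkt C q :=
  Nat.le_findGreatest (P := fun i => pS C i ≤ q) (bkt_le C p) (le_trans (pS_bkt_le C p) hpq)

lemma bkt_eq {k : ℕ} (C : Fin k → ℕ) {p i : ℕ} (hik : i ≤ k - 1)
    (h1 : pS C i ≤ p) (h2 : p < pS C (i + 1)) : bkt C p = i := by
  have hle : i ≤ bkt C p := Nat.le_findGreatest (P := fun j => pS C j ≤ p) hik h1
  rcases eq_or_lt_of_le hle with h | h
  · omega
  · have := le_trans (pS_mono C (by omega : i + 1 ≤ bkt C p)) (pS_bkt_le C p)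
    omega

end Helpers

section Core
variable {V : Type*} [Fintype V] [DecidableEq V]

lemma core_arrangement {G : SimpleGraph V} {n ℓ k : ℕ} (hn : Fintype.card V = n)
    (hnpos : 0 < n) (C : Fin k → ℕ) (hpos : ∀ i, 0 < C i)
    (hmid : ∀ i : Fin k, 0 < (i : ℕ) → (i : ℕ) < k - 1 → ℓ ≤ C i)
    (hsum : ∑ i, C i = n)
    (L : V ≃ Fin (Fintype.card V))
    (hL : ∀ u v, G.Adj u v → ((L u : ℤ) - (L v : ℤ)).natAbs ≤ ℓ) :
    ∃ B : V → Fin k, IsBucketArrangement G C B := by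
  have hk : 0 < k := by
    rcases Nat.eq_zero_or_pos k with h0 | h0
    · subst h0; simp at hsum; omega
    · exact h0
  have hpSk : pS C k = n := by rw [pS_k, hsum]
  set f : V → ℕ := fun v => (L v : ℕ) with hf
  have hfn : ∀ v, f v < n := fun v => hn ▸ (L v).isLt
  refine ⟨fun v => ⟨bkt C (f v), by have := bkt_le C (f v); omega⟩, ?_, ?_⟩
  · intro u v huv
    have h1 := hL u v huv
    have h1' : (f u : ℤ) - (f v : ℤ) = (L u : ℤ) - (L v : ℤ) := by
      simp [hf]
    rw [← h1'] at h1
    have key : ∀ a b : ℕ, a < n → b < n → a ≤ b → b ≤ a + ℓ →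
        bkt C b ≤ bkt C a + 1 := by
      intro a b ha hb hab hstretch
      by_contra hcon
      push_neg at hcon
      have hblek := bkt_le C b
      have hjlt : bkt C a + 1 < k - 1 := by omega
      have hc : ℓ ≤ C ⟨bkt C a + 1, by omega⟩ :=
        hmid ⟨bkt C a + 1, by omega⟩ (Nat.succ_pos _) hjlt
      have h2 : pS C (bkt C a + 2) ≤ pS C (bkt C b) := pS_mono C (by omega)
      have h3 : pS C (bkt C b) ≤ b := pS_bkt_le C b
      have h4 : a < pS C (bkt C a + 1) := lt_pS_bkt_succ C (by omega)
      have h5 : pS C (bkt C a + 2) =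
          pS C (bkt C a + 1) + C ⟨bkt C a + 1, by omega⟩ := by
        rw [pS_succ, dif_pos (by omega : bkt C a + 1 < k)]
      omega
    simp only [Fin.mk_val]
    rcases le_total (f u) (f v) with h | h
    · have hle := key (f u) (f v) (hfn u) (hfn v) h (by omega)
      have hmo := bkt_mono C h
      omega
    · have hle := key (f v) (f u) (hfn v) (hfn u) h (by omega)
      have hmo := bkt_mono C h
      omega
  · intro i
    have hcond : ∀ v : V, ((⟨bkt C (f v), by have := bkt_le C (f v); omega⟩ : Fin k) = i)
        ↔ bkt C (f v) = (i : ℕ) := by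
      intro v; constructor
      · intro h; rw [← h]
      · intro h; exact Fin.ext h
    have step1 : (Finset.univ.filter
          (fun v => (⟨bkt C (f v), by have := bkt_le C (f v); omega⟩ : Fin k) = i)).card
        = ((Finset.range n).filter (fun p => bkt C p = (i : ℕ))).card := by
      refine Finset.card_bij' (fun v _ => f v)
        (fun p hp => L.symm ⟨p, by rw [hn]; exact Finset.mem_range.1 (Finset.mem_filter.1 hp).1⟩)
        ?_ ?_ ?_ ?_
      · intro a ha
        rw [Finset.mem_filter] at ha ⊢
        exact ⟨Finset.mem_range.2 (hfn a), (hcond a).1 ha.2⟩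
      · intro p hp
        rw [Finset.mem_filter] at hp ⊢
        refine ⟨Finset.mem_univ _, (hcond _).2 ?_⟩
        have hfp : f (L.symm ⟨p, by rw [hn]; exact Finset.mem_range.1 hp.1⟩) = p := by
          simp [hf]
        rw [hfp]; exact hp.2
      · intro a _
        simp [hf]
      · intro p _
        simp [hf]
    have step2 : ((Finset.range n).filter (fun p => bkt C p = (i : ℕ)))
        = Finset.Ico (pS C (i : ℕ)) (pS C ((i : ℕ) + 1)) := by
      ext p
      simp only [Finset.mem_filter, Finset.mem_range, Finset.mem_Ico]
      constructor
      · rintro ⟨hp, hb⟩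
        rw [← hb]
        exact ⟨pS_bkt_le C p, lt_pS_bkt_succ C (by omega)⟩
      · rintro ⟨h1, h2⟩
        have hpn : p < n := by
          have : pS C ((i : ℕ) + 1) ≤ pS C k := pS_mono C i.isLt
          omega
        exact ⟨hpn, bkt_eq C (by have := i.isLt; omega) h1 h2⟩
    rw [step1, step2, Nat.card_Ico, pS_succ, dif_pos i.isLt]
    simp
end Core

section Conv
variable {V : Type*} [Fintype V] [DecidableEq V]

lemma bandwidth_set_nonempty (G : SimpleGraph V) [Nonempty V] :
    {b | ∃ L : V ≃ Fin (Fintype.card V),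
      ∀ u v, G.Adj u v → ((L u : ℤ) - (L v : ℤ)).natAbs ≤ b}.Nonempty := by
  refine ⟨Fintype.card V, Fintype.equivFin V, fun u v _ => ?_⟩
  have h1 := ((Fintype.equivFin V) u).isLt
  have h2 := ((Fintype.equivFin V) v).isLt
  omega

lemma bandwidth_mem (G : SimpleGraph V) [Nonempty V] :
    ∃ L : V ≃ Fin (Fintype.card V),
      ∀ u v, G.Adj u v → ((L u : ℤ) - (L v : ℤ)).natAbs ≤ bandwidth G :=
  Nat.sInf_mem (bandwidth_set_nonempty G)

lemma bandwidth_pos {G : SimpleGraph V} (hedge : ∃ u v, G.Adj u v) :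
    0 < bandwidth G := by
  obtain ⟨u, v, huv⟩ := hedge
  have : Nonempty V := ⟨u⟩
  rcases Nat.eq_zero_or_pos (bandwidth G) with h0 | h0
  · exfalso
    obtain ⟨L, hL⟩ := bandwidth_mem G
    have h1 := hL u v huv
    rw [h0] at h1
    have h2 : (L u : ℕ) = (L v : ℕ) := by omega
    have : u = v := L.injective (Fin.ext h2)
    exact G.ne_of_adj huv this
  · exact h0

lemma bw_le_of_arrangement {G : SimpleGraph V} {n ℓ k : ℕ}
    (hn : Fintype.card V = n) (hnpos : 0 < n)
    (C : Fin k → ℕ) (hpos : ∀ i, 0 < C i) (hle : ∀ i, C i ≤ ℓ)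
    (hsum : ∑ i, C i = n) (B : V → Fin k) (hB : IsBucketArrangement G C B) :
    bandwidth G ≤ 2 * ℓ - 1 := by
  classical
  have hpSk : pS C k = n := by rw [pS_k, hsum]
  set e := Fintype.equivFin V with he
  set rank : V → ℕ := fun v =>
    (Finset.univ.filter (fun u => B u = B v ∧ e u < e v)).card with hrank
  set pos : V → ℕ := fun v => pS C (B v : ℕ) + rank v with hposdef
  have hcle : ∀ j : ℕ, (if h : j < k then C ⟨j, h⟩ else 0) ≤ ℓ := by
    intro j
    split
    · exact hle _
    · exact Nat.zero_le _
  have hrank_lt : ∀ v, rank v < C (B v) := by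
    intro v
    rw [← hB.2 (B v)]
    apply Finset.card_lt_card
    have hsub : Finset.univ.filter (fun u => B u = B v ∧ e u < e v)
        ⊆ Finset.univ.filter (fun u => B u = B v) := by
      intro w hw
      rw [Finset.mem_filter] at hw ⊢
      exact ⟨hw.1, hw.2.1⟩
    rw [Finset.ssubset_iff_of_subset hsub]
    exact ⟨v, Finset.mem_filter.2 ⟨Finset.mem_univ v, rfl⟩,
      fun hv => absurd (Finset.mem_filter.1 hv).2.2 (lt_irrefl _)⟩
  have hpos_lt : ∀ v, pos v < pS C ((B v : ℕ) + 1) := by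
    intro v
    rw [pS_succ, dif_pos (B v).isLt, Fin.eta]
    have := hrank_lt v
    simp only [hposdef]
    omega
  have hpos_n : ∀ v, pos v < n := by
    intro v
    have h1 := hpos_lt v
    have h2 : pS C ((B v : ℕ) + 1) ≤ pS C k := pS_mono C (B v).isLt
    omega
  have hrank_mono : ∀ u v, B u = B v → e u < e v → rank u < rank v := by
    intro u v hBuv heuv
    apply Finset.card_lt_card
    rw [Finset.ssubset_iff_of_subset]
    · exact ⟨u, Finset.mem_filter.2 ⟨Finset.mem_univ u, hBuv, heuv⟩,
        fun hu => absurd (Finset.mem_filter.1 hu).2.2 (lt_irrefl _)⟩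
    · intro w hw
      rw [Finset.mem_filter] at hw ⊢
      exact ⟨hw.1, hw.2.1.trans hBuv, hw.2.2.trans heuv⟩
  have hinj : Function.Injective pos := by
    intro u v huv
    by_contra hne
    have hBeq : B u = B v := by
      by_contra hBne
      rcases lt_or_gt_of_ne (fun h : (B u : ℕ) = (B v : ℕ) => hBne (Fin.ext h)) with h | h
      · have h1 : pos u < pS C ((B u : ℕ) + 1) := hpos_lt u
        have h2 : pS C ((B u : ℕ) + 1) ≤ pS C (B v : ℕ) := pS_mono C h
        have h3 : pS C (B v : ℕ) ≤ pos v := Nat.le_add_right _ _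
        omega
      · have h1 : pos v < pS C ((B v : ℕ) + 1) := hpos_lt v
        have h2 : pS C ((B v : ℕ) + 1) ≤ pS C (B u : ℕ) := pS_mono C h
        have h3 : pS C (B u : ℕ) ≤ pos u := Nat.le_add_right _ _
        omega
    have hre : rank u = rank v := by
      have : pS C (B u : ℕ) = pS C (B v : ℕ) := by rw [hBeq]
      simp only [hposdef] at huv
      omega
    have heeq : e u = e v := by
      rcases lt_trichotomy (e u) (e v) with h | h | h
      · have := hrank_mono u v hBeq h; omega
      · exact h
      · have := hrank_mono v u hBeq.symm h; omega
    exact hne (e.injective heeq)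
  set L0 : V → Fin (Fintype.card V) := fun v => ⟨pos v, by rw [hn]; exact hpos_n v⟩
    with hL0
  have hbij : Function.Bijective L0 := by
    rw [Fintype.bijective_iff_injective_and_card]
    refine ⟨fun a b hab => hinj ?_, by simp⟩
    have : (L0 a : ℕ) = (L0 b : ℕ) := by rw [hab]
    exact this
  set L : V ≃ Fin (Fintype.card V) := Equiv.ofBijective L0 hbij with hLdef
  apply Nat.sInf_le
  refine ⟨L, fun u v huv => ?_⟩
  have hedge := hB.1 u v huv
  have key : ∀ a b : V, (B a : ℕ) ≤ (B b : ℕ) → (B b : ℕ) ≤ (B a : ℕ) + 1 →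
      pos b < pS C (B a : ℕ) + 2 * ℓ := by
    intro a b h1 h2
    have h3 : pos b < pS C ((B b : ℕ) + 1) := hpos_lt b
    have h4 : pS C ((B b : ℕ) + 1) ≤ pS C ((B a : ℕ) + 2) := pS_mono C (by omega)
    have h5 : pS C ((B a : ℕ) + 2) = pS C ((B a : ℕ) + 1)
        + (if h : (B a : ℕ) + 1 < k then C ⟨(B a : ℕ) + 1, h⟩ else 0) := pS_succ C _
    have h6 : pS C ((B a : ℕ) + 1) = pS C (B a : ℕ)
        + (if h : (B a : ℕ) < k then C ⟨(B a : ℕ), h⟩ else 0) := pS_succ C _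
    have h7 := hcle ((B a : ℕ) + 1)
    have h8 := hcle ((B a : ℕ))
    omega
  show ((pos u : ℤ) - (pos v : ℤ)).natAbs ≤ 2 * ℓ - 1
  rcases le_total (B u : ℕ) (B v : ℕ) with h | h
  · have h1 := key u v h (by omega)
    have h1' := key u u (le_refl _) (by omega)
    have h2 : pS C (B u : ℕ) ≤ pos u := Nat.le_add_right _ _
    have h4 : pS C (B u : ℕ) ≤ pS C (B v : ℕ) := pS_mono C h
    have h5 : pS C (B v : ℕ) ≤ pos v := Nat.le_add_right _ _
    omega
  · have h1 := key v u h (by omega)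
    have h1' := key v v (le_refl _) (by omega)
    have h2 : pS C (B v : ℕ) ≤ pos v := Nat.le_add_right _ _
    have h4 : pS C (B v : ℕ) ≤ pS C (B u : ℕ) := pS_mono C h
    have h5 : pS C (B u : ℕ) ≤ pos u := Nat.le_add_right _ _
    omega
end Conv

lemma cap_exists (n ℓ : ℕ) (hn : 0 < n) (hl : 0 < ℓ) :
    ∃ (k : ℕ) (C : Fin k → ℕ), IsNLCapacityVector n ℓ C := by
  set k := (n + ℓ - 1) / ℓ with hk
  have hk1 : 1 ≤ k := (Nat.le_div_iff_mul_le hl).2 (by omega)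
  have hk2 : k * ℓ ≤ n + ℓ - 1 := (Nat.le_div_iff_mul_le hl).1 (le_refl k)
  have hk3 : n ≤ k * ℓ := by
    have h : ¬ (k + 1 ≤ k) := by omega
    have h2 : ¬ ((k + 1) * ℓ ≤ n + ℓ - 1) := fun hc => h ((Nat.le_div_iff_mul_le hl).2 hc)
    have h3 : (k + 1) * ℓ = k * ℓ + ℓ := by ring
    omega
  have hkm1 : (k - 1) * ℓ = k * ℓ - ℓ := by
    rw [Nat.sub_mul, one_mul]
  have hk4 : (k - 1) * ℓ < n := by
    have hlk : ℓ ≤ k * ℓ := Nat.le_mul_of_pos_left ℓ hk1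
    omega
  clear_value k
  refine ⟨k, fun i => if (i : ℕ) = k - 1 then n - (k - 1) * ℓ else ℓ, hk, ?_, ?_, ?_, ?_⟩
  · intro i
    dsimp only
    split
    · omega
    · exact hl
  · dsimp only
    obtain ⟨m, rfl⟩ : ∃ m, k = m + 1 := ⟨k - 1, by omega⟩
    rw [Fin.sum_univ_castSucc]
    have hlast : ((Fin.last m : Fin (m+1)) : ℕ) = m := rfl
    have h1 : ∀ i : Fin m, (if ((i.castSucc : Fin (m+1)) : ℕ) = m + 1 - 1 then
        n - (m + 1 - 1) * ℓ else ℓ) = ℓ := by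
      intro i
      rw [if_neg]
      have := i.isLt
      simp only [Fin.coe_castSucc]
      omega
    rw [Finset.sum_congr rfl (fun i _ => h1 i)]
    simp only [Finset.sum_const, Finset.card_univ, Fintype.card_fin, smul_eq_mul,
      hlast]
    rw [if_pos (by omega)]
    simp only [Nat.add_sub_cancel] at hk4 ⊢
    omega
  · intro i
    dsimp only
    split
    · have hlk : ℓ ≤ k * ℓ := Nat.le_mul_of_pos_left ℓ hk1
      omega
    · exact le_refl ℓ
  · intro i _ hi
    dsimp only
    rw [if_neg (by omega)]

theorem two_approximation_via_bucket_decompositions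
    {V : Type*} [Fintype V] [DecidableEq V] (G : SimpleGraph V)
    (n : ℕ) (hn : Fintype.card V = n) (hedge : ∃ u v, G.Adj u v) :
    (∀ (ℓ k : ℕ) (C : Fin k → ℕ), (∀ i, 0 < C i) → (∀ i, ℓ ≤ C i) → (∑ i, C i = n) →
      bandwidth G ≤ ℓ → ∃ B : V → Fin k, IsBucketArrangement G C B) ∧
    (∀ lstar : ℕ,
      lstar = sInf {ℓ | 0 < ℓ ∧ ∃ (k : ℕ) (C : Fin k → ℕ) (B : V → Fin k),
        IsNLCapacityVector n ℓ C ∧ IsBucketArrangement G C B} →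
      bandwidth G ≤ 2 * lstar - 1 ∧ 2 * lstar - 1 ≤ 2 * bandwidth G - 1) := by
  obtain ⟨u0, v0, huv0⟩ := hedge
  have hne : Nonempty V := ⟨u0⟩
  have hnpos : 0 < n := by rw [← hn]; exact Fintype.card_pos
  have hbwpos : 0 < bandwidth G := bandwidth_pos ⟨u0, v0, huv0⟩
  obtain ⟨L, hL⟩ := bandwidth_mem G
  constructor
  · intro ℓ k C hpos hge hsum hbw
    exact core_arrangement hn hnpos C hpos (fun i _ _ => hge i) hsum L
      (fun u v h => le_trans (hL u v h) hbw)
  · intro lstar hstar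
    obtain ⟨k0, C0, hcap0⟩ := cap_exists n (bandwidth G) hnpos hbwpos
    obtain ⟨B0, hB0⟩ := core_arrangement hn hnpos C0 hcap0.2.1
      (fun i h1 h2 => le_of_eq (hcap0.2.2.2.2 i h1 h2).symm) hcap0.2.2.1 L hL
    have hmemS : bandwidth G ∈ {ℓ | 0 < ℓ ∧ ∃ (k : ℕ) (C : Fin k → ℕ) (B : V → Fin k),
        IsNLCapacityVector n ℓ C ∧ IsBucketArrangement G C B} :=
      ⟨hbwpos, k0, C0, B0, hcap0, hB0⟩
    have hls_le : lstar ≤ bandwidth G := by rw [hstar]; exact Nat.sInf_le hmemS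
    have hls_mem := Nat.sInf_mem (⟨_, hmemS⟩ : Set.Nonempty _)
    rw [← hstar] at hls_mem
    obtain ⟨hls0, k', C', B', hcap', hB'⟩ := hls_mem
    exact ⟨bw_le_of_arrangement hn hnpos C' hcap'.2.1 hcap'.2.2.2.1 hcap'.2.2.1 B' hB',
      by omega⟩
end
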